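/- Let J be a graded ideal of S = k[x_0,...,x_n] such that J is not generated in degrees ≥ m (i.e., J_{m'} ≠ 0 for some m' < m) and J_m is spanned by an initial revlex segment. If moreover J_{m+l} = S_l·J_m for all l ≥ 0, then the Hilbert function of S/J is eventually constant (the Hilbert polynomial of J is constant). -/

import Mathlib

/-!
By the hypotheses, `J_{m+l}` is spanned by the monomials of degree `m + l` divisible by some
`x^w`, `w ∈ W`, so the Hilbert function of `S/J` in degree `d ≥ m` counts the standard
monomials of degree `d`. A generator of degree `m' < m` times `x_n^{m-m'}` shows that `W`
contains a monomial divisible by `x_n`; being a revlex segment, `W` then contains every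
monomial of degree `m` in `x_0, …, x_{n-1}`. Hence for `d ≥ m` every standard monomial of
degree `d + 1` is divisible by `x_n`, and multiplication by `x_n` is a bijection from the
standard monomials of degree `d` onto those of degree `d + 1`: if `x^w` divides `x^ν x_n` but
not `x^ν`, then `x^w x_j / x_n` lies in `W` for a `j` with `w_j < ν_j`, and divides `x^ν`.
-/

open MvPolynomial

/-- `RevLexGt α β` means `x^α ≻ x^β` in the degree reverse lexicographic order. -/
def RevLexGt {N : ℕ} (α β : Fin N →₀ ℕ) : Prop :=
  ∃ i, α i < β i ∧ ∀ j, i < j → α j = β j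

/-- `W` is an initial revlex segment in degree `m`. -/
def IsRevLexSegment {N : ℕ} (m : ℕ) (W : Set (Fin N →₀ ℕ)) : Prop :=
  (∀ α ∈ W, ∑ i, α i = m) ∧
  ∀ α β : Fin N →₀ ℕ, (∑ i, α i = m) → β ∈ W → RevLexGt α β → α ∈ W

noncomputable instance {k : Type*} [CommRing k] {n : ℕ} :
    GradedAlgebra (homogeneousSubmodule (Fin (n + 1)) k) :=
  MvPolynomial.gradedAlgebra

open Finsupp
open scoped Pointwise

section Monomials

variable {σ R : Type*}

theorem homogeneousSubmodule_eq_restrictSupport [CommSemiring R] (d : ℕ) :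
    homogeneousSubmodule σ R d = restrictSupport R {ν | ν.degree = d} :=
  homogeneousSubmodule_eq_finsupp_supported σ R d

theorem finrank_restrictSupport [CommRing R] [StrongRankCondition R] {s : Set (σ →₀ ℕ)}
    (hs : s.Finite) : Module.finrank R (restrictSupport R s) = s.ncard := by
  have := hs.fintype
  rw [Module.finrank_eq_card_basis (basisRestrictSupport R s), Set.ncard_eq_toFinset_card',
    Set.toFinset_card]

theorem finrank_restrictSupport_sub_finrank_restrictSupport [CommRing R] [StrongRankCondition R]
    {s t : Set (σ →₀ ℕ)} (hts : t ⊆ s) (hs : s.Finite) :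
    Module.finrank R (restrictSupport R s) - Module.finrank R (restrictSupport R t) =
      (s \ t).ncard := by
  rw [finrank_restrictSupport hs, finrank_restrictSupport (hs.subset hts),
    Set.ncard_sdiff hts (hs.subset hts)]

theorem exists_mem_le_apply_of_mul_monomial_mem [CommSemiring R] {f : MvPolynomial σ R}
    (hf : f ≠ 0) {s : Set (σ →₀ ℕ)} (i : σ) (e : ℕ)
    (h : f * monomial (single i e) 1 ∈ restrictSupport R s) : ∃ μ ∈ s, e ≤ μ i := by
  obtain ⟨ν, hν⟩ := support_nonempty.mpr hf
  refine ⟨ν + single i e, (mem_restrictSupport_iff R).mp h ?_, by simp⟩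
  rw [Finset.mem_coe, MvPolynomial.mem_support_iff, coeff_mul_monomial, mul_one]
  exact MvPolynomial.mem_support_iff.mp hν

def standardExponents (W : Set (σ →₀ ℕ)) (d : ℕ) : Set (σ →₀ ℕ) :=
  {ν | ν.degree = d ∧ ∀ w ∈ W, ¬w ≤ ν}

theorem setOf_degree_eq_sdiff_add_eq_standardExponents {W : Set (σ →₀ ℕ)} {m : ℕ}
    (hW : ∀ w ∈ W, w.degree = m) (l : ℕ) :
    {ν | ν.degree = m + l} \ ({ν | ν.degree = l} + W) = standardExponents W (m + l) := by
  ext ν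
  simp only [standardExponents, Set.mem_sdiff, Set.mem_ofPred_eq, Set.mem_add, not_exists,
    not_and]
  refine and_congr_right fun hν => ⟨fun h w hw hwν => ?_, fun h a _ w hw hν' => ?_⟩
  · refine h (ν - w) ?_ w hw (tsub_add_cancel_of_le hwν)
    have := congrArg degree (tsub_add_cancel_of_le hwν)
    rw [map_add, hν, hW w hw] at this
    omega
  · exact h w hw (hν' ▸ le_add_self)

theorem setOf_degree_eq_add_subset {W : Set (σ →₀ ℕ)} {m : ℕ} (hW : ∀ w ∈ W, w.degree = m)
    (l : ℕ) : {ν | ν.degree = l} + W ⊆ {ν | ν.degree = m + l} := by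
  rintro _ ⟨a, ha, w, hw, rfl⟩
  simp_all [add_comm]

end Monomials

theorem revLexGt_of_apply_last_lt {n : ℕ} {α β : Fin (n + 1) →₀ ℕ}
    (h : α (Fin.last n) < β (Fin.last n)) : RevLexGt α β :=
  ⟨Fin.last n, h, fun j hj => absurd hj (Fin.le_last j).not_gt⟩

namespace IsRevLexSegment

variable {n m : ℕ} {W : Set (Fin (n + 1) →₀ ℕ)}

theorem degree_eq (hW : IsRevLexSegment m W) {w : Fin (n + 1) →₀ ℕ} (hw : w ∈ W) :
    w.degree = m := by
  rw [degree_eq_sum]; exact hW.1 w hw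

theorem mem_of_apply_last_lt (hW : IsRevLexSegment m W) {α w : Fin (n + 1) →₀ ℕ} (hw : w ∈ W)
    (hα : α.degree = m) (h : α (Fin.last n) < w (Fin.last n)) : α ∈ W :=
  hW.2 α w (by rwa [← degree_eq_sum]) hw (revLexGt_of_apply_last_lt h)

theorem exists_le_of_le_add_single_last (hW : IsRevLexSegment m W) {w ν : Fin (n + 1) →₀ ℕ}
    (hw : w ∈ W) (hν : m ≤ ν.degree) (hwν : w ≤ ν + single (Fin.last n) 1) :
    ∃ w' ∈ W, w' ≤ ν := by
  by_cases hlast : w (Fin.last n) ≤ ν (Fin.last n)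
  · refine ⟨w, hw, fun i => ?_⟩
    have := hwν i
    by_cases hi : i = Fin.last n
    · exact hi ▸ hlast
    · simpa [single_apply, Ne.symm hi] using this
  obtain ⟨j, hj⟩ : ∃ j, w j < ν j := by
    by_contra! hc
    obtain ⟨c, rfl⟩ := le_iff_exists_add.mp (show ν ≤ w from hc)
    have hc0 : c = 0 := by
      rw [← degree_eq_zero_iff]
      have := hW.degree_eq hw
      rw [map_add] at this
      omega
    simp [hc0] at hlast
  have hjl : j ≠ Fin.last n := by
    rintro rfl
    have := hwν (Fin.last n)
    simp only [Finsupp.coe_add, Pi.add_apply, single_eq_same] at this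
    omega
  obtain ⟨w₀, rfl⟩ : ∃ w₀, w = w₀ + single (Fin.last n) 1 := by
    obtain ⟨w₀, hw₀⟩ := le_iff_exists_add.mp
      (show single (Fin.last n) 1 ≤ w from single_le_iff.mpr (by omega))
    exact ⟨w₀, hw₀.trans (add_comm _ _)⟩
  refine ⟨w₀ + single j 1, hW.mem_of_apply_last_lt hw ?_ ?_, fun i => ?_⟩
  · simpa using hW.degree_eq hw
  · simp [hjl]
  · have := hwν i
    by_cases hij : i = j
    · subst hij; simp_all
    · simp_all [single_apply]

theorem standardExponents_succ (hW : IsRevLexSegment m W) {μ : Fin (n + 1) →₀ ℕ} (hμ : μ ∈ W)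
    (hμl : μ (Fin.last n) ≠ 0) {d : ℕ} (hd : m ≤ d) :
    standardExponents W (d + 1) =
      (· + single (Fin.last n) 1) '' standardExponents W d := by
  ext τ
  constructor
  · rintro ⟨hτ, hτW⟩
    have hτl : τ (Fin.last n) ≠ 0 := by
      intro hτl
      obtain ⟨β, hβτ, hβ⟩ := exists_le_degree_eq τ m (by omega)
      refine hτW β (hW.mem_of_apply_last_lt hμ hβ ?_) hβτ
      have := hβτ (Fin.last n)
      omega
    obtain ⟨ν, rfl⟩ := le_iff_exists_add.mp
      (show single (Fin.last n) 1 ≤ τ from single_le_iff.mpr (by omega))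
    refine ⟨ν, ⟨?_, fun w hw hwν => hτW w hw (hwν.trans le_add_self)⟩, add_comm _ _⟩
    simp only [map_add, degree_single] at hτ
    omega
  · rintro ⟨ν, ⟨hν, hνW⟩, rfl⟩
    refine ⟨by simp [hν], fun w hw hwν => ?_⟩
    obtain ⟨w', hw', hw'ν⟩ := hW.exists_le_of_le_add_single_last hw (hν ▸ hd) hwν
    exact hνW w' hw' hw'ν

theorem ncard_standardExponents_eq (hW : IsRevLexSegment m W) {μ : Fin (n + 1) →₀ ℕ}
    (hμ : μ ∈ W) (hμl : μ (Fin.last n) ≠ 0) {d : ℕ} (hd : m ≤ d) :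
    (standardExponents W d).ncard = (standardExponents W m).ncard := by
  induction d, hd using Nat.le_induction with
  | base => rfl
  | succ d hd ih =>
    rw [hW.standardExponents_succ hμ hμl hd, Set.ncard_image_of_injective _ (add_left_injective _),
      ih]

end IsRevLexSegment

theorem stmt7_general {k : Type*} [Field k] (n m : ℕ)
    (J : Ideal (MvPolynomial (Fin (n + 1)) k))
    (hlow : ∃ m' < m, (Submodule.restrictScalars k J ⊓
      homogeneousSubmodule (Fin (n + 1)) k m') ≠ ⊥)
    (W : Set (Fin (n + 1) →₀ ℕ)) (hW : IsRevLexSegment m W)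
    (hspan : Submodule.restrictScalars k J ⊓ homogeneousSubmodule (Fin (n + 1)) k m =
      Submodule.span k ((fun ν => (monomial ν (1 : k) : MvPolynomial (Fin (n + 1)) k)) '' W))
    (hgen : ∀ l : ℕ,
      Submodule.restrictScalars k J ⊓ homogeneousSubmodule (Fin (n + 1)) k (m + l) =
        (homogeneousSubmodule (Fin (n + 1)) k l *
          (Submodule.restrictScalars k J ⊓ homogeneousSubmodule (Fin (n + 1)) k m) :
          Submodule k (MvPolynomial (Fin (n + 1)) k))) :
    ∃ (c N : ℕ), ∀ d : ℕ, N ≤ d →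
      Module.finrank k (homogeneousSubmodule (Fin (n + 1)) k d) -
        Module.finrank k ↥(Submodule.restrictScalars k J ⊓
          homogeneousSubmodule (Fin (n + 1)) k d) = c := by
  have hJm : Submodule.restrictScalars k J ⊓ homogeneousSubmodule (Fin (n + 1)) k m =
      restrictSupport k W := by
    rw [hspan, restrictSupport_eq_span]
  obtain ⟨μ, hμ, hμl⟩ : ∃ μ ∈ W, μ (Fin.last n) ≠ 0 := by
    obtain ⟨m', hm', hne⟩ := hlow
    obtain ⟨f, ⟨hfJ, hf⟩, hf0⟩ := Submodule.exists_mem_ne_zero_of_ne_bot hne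
    have hmul : f * monomial (single (Fin.last n) (m - m')) 1 ∈ restrictSupport k W := by
      rw [← hJm]
      refine ⟨J.mul_mem_right _ hfJ, ?_⟩
      simpa [show m' + (m - m') = m by omega] using
        hf.mul (isHomogeneous_monomial (1 : k) (degree_single (Fin.last n) (m - m')))
    obtain ⟨μ, hμ, hμl⟩ := exists_mem_le_apply_of_mul_monomial_mem hf0 _ _ hmul
    exact ⟨μ, hμ, by omega⟩
  have hJ : ∀ l, Submodule.restrictScalars k J ⊓ homogeneousSubmodule (Fin (n + 1)) k (m + l) =
      restrictSupport k ({ν | ν.degree = l} + W) := fun l => by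
    rw [hgen, hJm, homogeneousSubmodule_eq_restrictSupport, restrictSupport_add]
  refine ⟨(standardExponents W m).ncard, m, fun d hd => ?_⟩
  obtain ⟨l, rfl⟩ := Nat.exists_eq_add_of_le hd
  rw [hJ, homogeneousSubmodule_eq_restrictSupport,
    finrank_restrictSupport_sub_finrank_restrictSupport
      (setOf_degree_eq_add_subset (fun _ => hW.degree_eq) l) (finite_of_degree_eq _),
    setOf_degree_eq_sdiff_add_eq_standardExponents (fun _ => hW.degree_eq) l,
    hW.ncard_standardExponents_eq hμ hμl hd]

/-- Corollary 5.2: let `J` be a graded ideal with `J_{m'} ≠ 0` for some `m' < m`, whose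
degree `m` part is spanned by an initial revlex segment. If `J_{m+l} = S_l·J_m` for all
`l ≥ 0`, then the Hilbert function of `S/J` is eventually constant. -/
theorem stmt7 {k : Type*} [Field k] [CharZero k] (n m : ℕ) (hn : 1 ≤ n)
    (J : Ideal (MvPolynomial (Fin (n + 1)) k))
    (hJ : J.IsHomogeneous (homogeneousSubmodule (Fin (n + 1)) k))
    (hlow : ∃ m' < m, (Submodule.restrictScalars k J ⊓
      homogeneousSubmodule (Fin (n + 1)) k m') ≠ ⊥)
    (W : Set (Fin (n + 1) →₀ ℕ)) (hW : IsRevLexSegment m W)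
    (hspan : Submodule.restrictScalars k J ⊓ homogeneousSubmodule (Fin (n + 1)) k m =
      Submodule.span k ((fun ν => (monomial ν (1 : k) : MvPolynomial (Fin (n + 1)) k)) '' W))
    (hgen : ∀ l : ℕ,
      Submodule.restrictScalars k J ⊓ homogeneousSubmodule (Fin (n + 1)) k (m + l) =
        (homogeneousSubmodule (Fin (n + 1)) k l *
          (Submodule.restrictScalars k J ⊓ homogeneousSubmodule (Fin (n + 1)) k m) :
          Submodule k (MvPolynomial (Fin (n + 1)) k))) :
    ∃ (c N : ℕ), ∀ d : ℕ, N ≤ d →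
      Module.finrank k (homogeneousSubmodule (Fin (n + 1)) k d) -
        Module.finrank k ↥(Submodule.restrictScalars k J ⊓
          homogeneousSubmodule (Fin (n + 1)) k d) = c :=
  stmt7_general n m J hlow W hW hspan hgen
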